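/- For all y, y', η, η' ∈ ℝ³, one has |y ∧ η|² / (1 + |y'|² + |η'|² + |y' ∧ η'|²) ≤ 10 (⟨y − y'⟩ + ⟨η − η'⟩)^4, where ∧ is the cross product and ⟨x⟩ = (1+|x|²)^{1/2}. -/

import Mathlib

/-!
Write `y ∧ η` as `(y - y') ∧ (η - η') + (y - y') ∧ η' + y' ∧ (η - η') + y' ∧ η'`. Since
`|u ∧ w| ≤ |u| |w|`, its norm is at most the dot product of `(|a| |b|, |a|, |b|, 1)` and
`(1, |η'|, |y'|, |y' ∧ η'|)`, where `a = y - y'`, `b = η - η'`; by Cauchy–Schwarz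
`|y ∧ η|² ≤ (1 + |y'|² + |η'|² + |y' ∧ η'|²) ⟨a⟩² ⟨b⟩²`, and `16 ⟨a⟩² ⟨b⟩² ≤ (⟨a⟩ + ⟨b⟩)⁴`.
Only bilinearity and `|u ∧ w| ≤ |u| |w|` (Lagrange's identity) are used before the last step.
-/

/-- Cross product on `ℝ³` (Euclidean). -/
noncomputable def cross3 (u w : EuclideanSpace ℝ (Fin 3)) : EuclideanSpace ℝ (Fin 3) :=
  (WithLp.equiv 2 (Fin 3 → ℝ)).symm
    ![u 1 * w 2 - u 2 * w 1, u 2 * w 0 - u 0 * w 2, u 0 * w 1 - u 1 * w 0]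

open Matrix

section Bilinear

variable {E F G : Type*} [SeminormedAddCommGroup E] [SeminormedAddCommGroup F]
  [SeminormedAddCommGroup G] [Module ℝ E] [Module ℝ F] [Module ℝ G]

theorem LinearMap.norm_apply₂_le_sum_of_sub (f : E →ₗ[ℝ] F →ₗ[ℝ] G)
    (hf : ∀ u v, ‖f u v‖ ≤ ‖u‖ * ‖v‖) (x x' : E) (y y' : F) :
    ‖f x y‖ ≤ ‖x - x'‖ * ‖y - y'‖ + ‖x - x'‖ * ‖y'‖ + ‖x'‖ * ‖y - y'‖ + ‖f x' y'‖ := by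
  have hsplit : f x y = f (x - x') (y - y') + f (x - x') y' + f x' (y - y') + f x' y' := by
    simp only [map_sub, LinearMap.sub_apply]
    abel
  rw [hsplit]
  refine norm_add₄_le.trans ?_
  gcongr <;> exact hf _ _

theorem LinearMap.sq_norm_apply₂_le_mul_of_sub (f : E →ₗ[ℝ] F →ₗ[ℝ] G)
    (hf : ∀ u v, ‖f u v‖ ≤ ‖u‖ * ‖v‖) (x x' : E) (y y' : F) :
    ‖f x y‖ ^ 2 ≤ (1 + ‖x'‖ ^ 2 + ‖y'‖ ^ 2 + ‖f x' y'‖ ^ 2) *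
      ((1 + ‖x - x'‖ ^ 2) * (1 + ‖y - y'‖ ^ 2)) := by
  set a := ‖x - x'‖
  set b := ‖y - y'‖
  have hcs := Finset.sum_mul_sq_le_sq_mul_sq Finset.univ ![a * b, a, b, 1]
    ![1, ‖y'‖, ‖x'‖, ‖f x' y'‖]
  simp only [Fin.sum_univ_four, cons_val] at hcs
  calc ‖f x y‖ ^ 2 ≤ (a * b * 1 + a * ‖y'‖ + b * ‖x'‖ + 1 * ‖f x' y'‖) ^ 2 := by
        gcongr
        linarith [f.norm_apply₂_le_sum_of_sub hf x x' y y']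
    _ ≤ _ := hcs
    _ = _ := by ring

end Bilinear

noncomputable def cross3ₗ :
    EuclideanSpace ℝ (Fin 3) →ₗ[ℝ] EuclideanSpace ℝ (Fin 3) →ₗ[ℝ] EuclideanSpace ℝ (Fin 3) :=
  (crossProduct.compl₁₂ (WithLp.linearEquiv 2 ℝ (Fin 3 → ℝ)).toLinearMap
    (WithLp.linearEquiv 2 ℝ (Fin 3 → ℝ)).toLinearMap).compr₂
    (WithLp.linearEquiv 2 ℝ (Fin 3 → ℝ)).symm.toLinearMap

theorem cross3_eq_toLp_crossProduct (u w : EuclideanSpace ℝ (Fin 3)) :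
    cross3 u w = WithLp.toLp 2 (WithLp.ofLp u ⨯₃ WithLp.ofLp w) := rfl

theorem sq_norm_cross3_add_sq_inner (u w : EuclideanSpace ℝ (Fin 3)) :
    ‖cross3 u w‖ ^ 2 + inner ℝ u w ^ 2 = ‖u‖ ^ 2 * ‖w‖ ^ 2 := by
  simp only [← real_inner_self_eq_norm_sq, EuclideanSpace.inner_eq_star_dotProduct,
    cross3_eq_toLp_crossProduct, star_trivial, cross_dot_cross, dotProduct_comm (WithLp.ofLp u)]
  ring

theorem norm_cross3_le (u w : EuclideanSpace ℝ (Fin 3)) : ‖cross3 u w‖ ≤ ‖u‖ * ‖w‖ := by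
  refine le_of_sq_le_sq ?_ (by positivity)
  nlinarith [sq_norm_cross3_add_sq_inner u w, sq_nonneg (inner ℝ u w)]

theorem sq_mul_le_pow_four {a b : ℝ} (ha : 0 ≤ a) (hb : 0 ≤ b) :
    16 * (a * b) ^ 2 ≤ (a + b) ^ 4 := by
  have := four_mul_le_sq_add a b
  calc 16 * (a * b) ^ 2 = (4 * a * b) ^ 2 := by ring
    _ ≤ ((a + b) ^ 2) ^ 2 := by gcongr
    _ = (a + b) ^ 4 := by ring

/-- `|y∧η|²/(1+|y'|²+|η'|²+|y'∧η'|²) ≤ 10 (⟨y-y'⟩ + ⟨η-η'⟩)⁴`. -/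
theorem cross_ratio_bound (y y' η η' : EuclideanSpace ℝ (Fin 3)) :
    ‖cross3 y η‖ ^ 2 / (1 + ‖y'‖ ^ 2 + ‖η'‖ ^ 2 + ‖cross3 y' η'‖ ^ 2) ≤
      10 * (Real.sqrt (1 + ‖y - y'‖ ^ 2) + Real.sqrt (1 + ‖η - η'‖ ^ 2)) ^ 4 := by
  set A := Real.sqrt (1 + ‖y - y'‖ ^ 2)
  set B := Real.sqrt (1 + ‖η - η'‖ ^ 2)
  have hAB : (1 + ‖y - y'‖ ^ 2) * (1 + ‖η - η'‖ ^ 2) = (A * B) ^ 2 := by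
    rw [mul_pow, Real.sq_sqrt (by positivity), Real.sq_sqrt (by positivity)]
  rw [div_le_iff₀ (by positivity)]
  calc ‖cross3 y η‖ ^ 2
      ≤ (1 + ‖y'‖ ^ 2 + ‖η'‖ ^ 2 + ‖cross3 y' η'‖ ^ 2) * (A * B) ^ 2 := by
        rw [← hAB]; exact cross3ₗ.sq_norm_apply₂_le_mul_of_sub norm_cross3_le y y' η η'
    _ ≤ (1 + ‖y'‖ ^ 2 + ‖η'‖ ^ 2 + ‖cross3 y' η'‖ ^ 2) * (10 * (A + B) ^ 4) := by
        have h16 : 16 * (A * B) ^ 2 ≤ (A + B) ^ 4 :=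
          sq_mul_le_pow_four (Real.sqrt_nonneg _) (Real.sqrt_nonneg _)
        gcongr
        linarith [(by positivity : (0 : ℝ) ≤ (A + B) ^ 4)]
    _ = 10 * (A + B) ^ 4 * (1 + ‖y'‖ ^ 2 + ‖η'‖ ^ 2 + ‖cross3 y' η'‖ ^ 2) := mul_comm _ _
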